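/- Let (E,ℒ) be a labeled graph satisfying the standing assumptions with ℰ the smallest normal accommodating set, let A ∈ ℰ be minimal, and let (α,A) be a loop with no exit (equivalently, A = r(A,α) and ℒ(AE^{|α|}) = {α}). Then: (1) ℒ(AE^{≥1}) = {α^k α′ : k ≥ 0, α′ an initial path of α}; (2) for every 1 ≤ i ≤ |α|, the relative range r(A, α_{[1,i]}) is minimal in ℰ; (3) if moreover |α| ≤ |β| for every loop (β,A), then the sets r(A, α_{[1,i]}), 1 ≤ i ≤ |α|, are pairwise disjoint. -/

import Mathlib

/-- The `n`-fold concatenation (power) `w^n` of a finite word `w`. -/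
def wpow {Λ : Type*} (w : List Λ) (n : ℕ) : List Λ := (List.replicate n w).flatten

/-- The finite word `x_{[1,n]}` formed by the first `n` letters of an infinite word `x`. -/
def wordPrefix {Λ : Type*} (x : ℕ → Λ) (n : ℕ) : List Λ := (List.range n).map x

/-- A labeled graph `(E, ℒ)`: a directed graph with vertex set `V` and edge type `Edge`
(with range and source maps), together with a surjective labeling map `lbl` onto the
alphabet `Λ`. -/
structure LabeledGraph (V : Type*) (Λ : Type*) where
  Edge : Type*
  src : Edge → V
  rng : Edge → V
  lbl : Edge → Λ
  lbl_surjective : Function.Surjective lbl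

namespace LabeledGraph

variable {V : Type*} {Λ : Type*}

/-- `G.PathLabel u w α` holds iff there is a finite path `λ` of length `≥ 1` in the graph
with source `u`, range `w` and label word `ℒ(λ) = α`. -/
inductive PathLabel (G : LabeledGraph V Λ) : V → V → List Λ → Prop
  | single (e : G.Edge) : PathLabel G (G.src e) (G.rng e) [G.lbl e]
  | cons (e : G.Edge) {w : V} {α : List Λ} :
      PathLabel G (G.rng e) w α → PathLabel G (G.src e) w (G.lbl e :: α)

variable (G : LabeledGraph V Λ)

/-- `α ∈ ℒ*(E)`: `α` is the label of some path of length `≥ 1`. -/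
def IsLabel (α : List Λ) : Prop := ∃ u w, G.PathLabel u w α

/-- The relative range `r(A, α)` of `α` with respect to `A`. -/
def rel (A : Set V) (α : List Λ) : Set V := {w | ∃ u ∈ A, G.PathLabel u w α}

/-- `r(α) = r(E⁰, α)`. -/
def range' (α : List Λ) : Set V := G.rel Set.univ α

/-- `s(α)`: the set of sources of paths labeled `α`. -/
def srcSet (α : List Λ) : Set V := {u | ∃ w, G.PathLabel u w α}

/-- `ℒ(AEⁿ)`: labels of paths of length `n` with source in `A`. -/
def lblFrom (A : Set V) (n : ℕ) : Set (List Λ) :=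
  {α | α.length = n ∧ ∃ u ∈ A, ∃ w, G.PathLabel u w α}

/-- `ℒ(AE^{≥1})`: labels of paths of length `≥ 1` with source in `A`. -/
def lblFromGe (A : Set V) : Set (List Λ) := {α | ∃ u ∈ A, ∃ w, G.PathLabel u w α}

/-- `ℒ(EⁿA)`: labels of paths of length `n` with range in `A`. -/
def lblTo (A : Set V) (n : ℕ) : Set (List Λ) :=
  {α | α.length = n ∧ ∃ u, ∃ w ∈ A, G.PathLabel u w α}

/-- The generalized vertex `[v]_l`: the set of vertices `w` receiving at least one edge
such that `ℒ(E^k w) = ℒ(E^k v)` for all `1 ≤ k ≤ l`. -/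
def gv (v : V) (l : ℕ) : Set V :=
  {w | (∃ e : G.Edge, G.rng e = w) ∧
    ∀ k : ℕ, 1 ≤ k → k ≤ l → G.lblTo {w} k = G.lblTo {v} k}

/-- Membership in `ℰ`, the smallest collection of subsets of `E⁰` containing all ranges
`r(α)` and closed under relative ranges, finite intersections, finite unions and
relative complements (the smallest normal accommodating set). -/
inductive memE : Set V → Prop
  | empty : memE ∅
  | range (α : List Λ) : α ≠ [] → memE (G.range' α)
  | relRange {A : Set V} (α : List Λ) : α ≠ [] → memE A → memE (G.rel A α)
  | inter {A C : Set V} : memE A → memE C → memE (A ∩ C)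
  | union {A C : Set V} : memE A → memE C → memE (A ∪ C)
  | diff {A C : Set V} : memE A → memE C → memE (A \ C)

/-- The standing assumptions on the labeled space `(E, ℒ, ℰ)`: the graph has no sinks and
the labeled space is weakly left-resolving, set-finite and receiver set-finite. -/
structure Standing : Prop where
  no_sinks : ∀ u : V, ∃ e : G.Edge, G.src e = u
  weakly_left_resolving : ∀ A C : Set V, G.memE A → G.memE C →
    ∀ α : List Λ, α ≠ [] → G.rel (A ∩ C) α = G.rel A α ∩ G.rel C α
  set_finite : ∀ A : Set V, G.memE A → ∀ k : ℕ, 1 ≤ k → (G.lblFrom A k).Finite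
  receiver_set_finite : ∀ A : Set V, G.memE A → ∀ k : ℕ, 1 ≤ k → (G.lblTo A k).Finite

/-- `α` is agreeable for `[v]_l` (the condition only depends on `l`):
`α = βα' = α'γ` with `α', β, γ ∈ ℒ*(E)` and `|β| = |γ| ≤ l`. -/
def Agreeable (l : ℕ) (α : List Λ) : Prop :=
  ∃ α' β γ : List Λ, G.IsLabel α' ∧ G.IsLabel β ∧ G.IsLabel γ ∧
    β.length = γ.length ∧ β.length ≤ l ∧ α = β ++ α' ∧ α = α' ++ γ

/-- `α` (a path with `s(α) ∩ [v]_l ≠ ∅`) is disagreeable for `[v]_l`. -/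
def DisagreeableFor (v : V) (l : ℕ) (α : List Λ) : Prop :=
  (G.srcSet α ∩ G.gv v l).Nonempty ∧ ¬ G.Agreeable l α

/-- The generalized vertex `[v]_l` is disagreeable: there is `N ≥ 1` such that for every
`n > N` there is a path in `ℒ(E^{≥n})` which is disagreeable for `[v]_l`. -/
def DisagreeableGV (v : V) (l : ℕ) : Prop :=
  ∃ N : ℕ, 1 ≤ N ∧ ∀ n : ℕ, N < n →
    ∃ α : List Λ, n ≤ α.length ∧ G.DisagreeableFor v l α

/-- The labeled space `(E, ℒ, ℰ)` is disagreeable. -/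
def Disagreeable : Prop :=
  ∀ v : V, ∃ L : ℕ, 1 ≤ L ∧ ∀ l : ℕ, L ≤ l → G.DisagreeableGV v l

/-- `(α, A)` is a loop: `A ∈ ℰ` is nonempty, `α ∈ ℒ*(E)` and `A ⊆ r(A, α)`. -/
def IsLoop (α : List Λ) (A : Set V) : Prop :=
  α ≠ [] ∧ G.memE A ∧ A.Nonempty ∧ A ⊆ G.rel A α

/-- The loop `(α, A)` has an exit: either (i) there is `β ∈ ℒ(AE^{|α|})` with `β ≠ α` and
`r(A, β) ≠ ∅`, or (ii) `A ⊊ r(A, α)`. -/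
def HasExit (α : List Λ) (A : Set V) : Prop :=
  (∃ β : List Λ, β ∈ G.lblFrom A α.length ∧ β ≠ α ∧ (G.rel A β).Nonempty) ∨
    A ⊂ G.rel A α

/-- `A ∈ ℰ` is minimal: `A ≠ ∅` and `A ∩ C ∈ {A, ∅}` for every `C ∈ ℰ`. -/
def MinimalSet (A : Set V) : Prop :=
  G.memE A ∧ A.Nonempty ∧ ∀ C : Set V, G.memE C → A ∩ C = A ∨ A ∩ C = ∅

/-- A set `Bset ⊆ E⁰` connects to a loop: there are a loop `(α, A)` and finitely many
paths `δ₁, …, δ_m ∈ ℒ*(E)`, none of which is an initial path of another, with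
`A ⊆ ∪ᵢ r(Bset, δᵢ)`. -/
def ConnectsToLoop (Bset : Set V) : Prop :=
  ∃ (α : List Λ) (A : Set V), G.IsLoop α A ∧
    ∃ (m : ℕ) (δ : Fin m → List Λ), (∀ i, G.IsLabel (δ i)) ∧
      (∀ i j, i ≠ j → ¬ (δ i <+: δ j)) ∧ A ⊆ ⋃ i, G.rel Bset (δ i)

/-- Every vertex connects to a loop: every generalized vertex `[v]_l` connects to a loop. -/
def EveryVertexConnectsToLoop : Prop :=
  ∀ (v : V) (l : ℕ), 1 ≤ l → (∃ e : G.Edge, G.rng e = v) →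
    G.ConnectsToLoop (G.gv v l)

/-- The labeled space `(E, ℒ, ℰ)` is strongly cofinal. -/
def StronglyCofinal : Prop :=
  ∀ x : ℕ → Λ, (∀ n : ℕ, 1 ≤ n → G.IsLabel (wordPrefix x n)) →
    ∀ (v : V) (l : ℕ), (∃ e : G.Edge, G.rng e = v) → 1 ≤ l →
      ∃ N : ℕ, 1 ≤ N ∧ ∃ (m : ℕ) (lam : Fin m → List Λ),
        (∀ i, G.IsLabel (lam i)) ∧
        G.range' (wordPrefix x N) ⊆ ⋃ i, G.rel (G.gv v l) (lam i)

/-- A subset `H ⊆ ℰ` is hereditary: it is closed under finite unions, relative ranges,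
and subsets belonging to `ℰ`. -/
def IsHereditary (H : Set (Set V)) : Prop :=
  (∀ A ∈ H, G.memE A) ∧
  (∀ A ∈ H, ∀ C ∈ H, A ∪ C ∈ H) ∧
  (∀ A ∈ H, ∀ β : List Λ, G.IsLabel β → G.rel A β ∈ H) ∧
  (∀ A ∈ H, ∀ C : Set V, G.memE C → C ⊆ A → C ∈ H)

/-- A subset `H ⊆ ℰ` is saturated: every `A ∈ ℰ` with `r(A, β) ∈ H` for all
`β ∈ ℒ*(E)` belongs to `H`. -/
def IsSaturated (H : Set (Set V)) : Prop :=
  ∀ A : Set V, G.memE A → (∀ β : List Λ, G.IsLabel β → G.rel A β ∈ H) → A ∈ H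

end LabeledGraph

/-!
A loop `(α, A)` without exit forces every path leaving `A` to follow `α` forever: extending a
path from `A` to length `|α|` (there are no sinks) produces the unique label `α`, which returns
to `A` since `r(A, α) = A`. For `i < |α|` every vertex of `r(A, α_{[1,i]})` therefore emits the
rest `α_{(i,|α|]}` of the loop and lands in `A`. If `r(A, α_{[1,i]})` split into two nonempty
pieces of `ℰ`, both would be carried onto all of the minimal set `A` by that rest, and weak
left-resolvingness would then carry their empty intersection onto `A` as well. Finally, two of
these minimal sets that meet coincide, and cutting out the segment of `α` between them leaves
a strictly shorter loop at `A`.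
-/

lemma wpow_succ' {Λ : Type*} (w : List Λ) (k : ℕ) : wpow w (k + 1) = wpow w k ++ w := by
  simp [wpow, List.replicate_succ']

namespace LabeledGraph

variable {V Λ : Type*} {G : LabeledGraph V Λ}

lemma PathLabel.ne_nil {u w : V} {β : List Λ} (h : G.PathLabel u w β) : β ≠ [] := by
  cases h <;> simp

lemma PathLabel.append {u v w : V} {β γ : List Λ} (h₁ : G.PathLabel u v β)
    (h₂ : G.PathLabel v w γ) : G.PathLabel u w (β ++ γ) := by
  induction h₁ with
  | single e => exact .cons e h₂
  | cons e _ ih => exact .cons e (ih h₂)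

lemma PathLabel.split {u w : V} {β γ : List Λ} (h : G.PathLabel u w (β ++ γ))
    (hβ : β ≠ []) (hγ : γ ≠ []) : ∃ v, G.PathLabel u v β ∧ G.PathLabel v w γ := by
  generalize hδ : β ++ γ = δ at h
  induction h generalizing β with
  | single e =>
    obtain ⟨b, β', rfl⟩ := List.exists_cons_of_ne_nil hβ
    simp_all
  | cons e h ih =>
    obtain ⟨b, β', rfl⟩ := List.exists_cons_of_ne_nil hβ
    obtain ⟨rfl, rfl⟩ := List.cons_eq_cons.mp hδ
    rcases eq_or_ne β' [] with rfl | hβ'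
    · exact ⟨_, .single e, h⟩
    · obtain ⟨v, h₁, h₂⟩ := ih hβ' rfl
      exact ⟨v, .cons e h₁, h₂⟩

lemma PathLabel.exists_of_prefix {u w : V} {β γ : List Λ} (h : G.PathLabel u w γ)
    (hβγ : β <+: γ) (hβ : β ≠ []) : ∃ v, G.PathLabel u v β := by
  obtain ⟨t, rfl⟩ := hβγ
  rcases eq_or_ne t [] with rfl | ht
  · exact ⟨w, by simpa using h⟩
  · obtain ⟨v, hv, -⟩ := h.split hβ ht
    exact ⟨v, hv⟩

lemma exists_pathLabel_length (hsink : ∀ u : V, ∃ e : G.Edge, G.src e = u) (u : V) {m : ℕ}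
    (hm : m ≠ 0) : ∃ z δ, δ.length = m ∧ G.PathLabel u z δ := by
  induction m generalizing u with
  | zero => contradiction
  | succ m ih =>
    obtain ⟨e, rfl⟩ := hsink u
    rcases eq_or_ne m 0 with rfl | hm
    · exact ⟨_, _, rfl, .single e⟩
    · obtain ⟨z, δ, hδ, hp⟩ := ih (G.rng e) hm
      exact ⟨z, _, by simp [hδ], .cons e hp⟩

lemma rel_mono {B C : Set V} (hBC : B ⊆ C) (β : List Λ) : G.rel B β ⊆ G.rel C β :=
  fun _ ⟨u, hu, hp⟩ => ⟨u, hBC hu, hp⟩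

@[simp]
lemma rel_empty (β : List Λ) : G.rel ∅ β = ∅ := by
  simp [rel]

lemma rel_rel {B : Set V} {β γ : List Λ} (hβ : β ≠ []) (hγ : γ ≠ []) :
    G.rel (G.rel B β) γ = G.rel B (β ++ γ) := by
  ext w
  constructor
  · rintro ⟨v, ⟨u, hu, h₁⟩, h₂⟩
    exact ⟨u, hu, h₁.append h₂⟩
  · rintro ⟨u, hu, h⟩
    obtain ⟨v, h₁, h₂⟩ := h.split hβ hγ
    exact ⟨v, ⟨u, hu, h₁⟩, h₂⟩

lemma MinimalSet.eq_of_subset {A B : Set V} (hA : G.MinimalSet A) (hB : G.memE B)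
    (hBne : B.Nonempty) (hBA : B ⊆ A) : B = A := by
  rcases hA.2.2 B hB with h | h
  · exact hBA.antisymm (h ▸ Set.inter_subset_right)
  · obtain ⟨b, hb⟩ := hBne
    exact (Set.eq_empty_iff_forall_notMem.1 h b ⟨hBA hb, hb⟩).elim

lemma MinimalSet.eq_of_inter_nonempty {A B : Set V} (hA : G.MinimalSet A)
    (hB : G.MinimalSet B) (hAB : (A ∩ B).Nonempty) : A = B :=
  (hA.eq_of_subset (.inter hA.1 hB.1) hAB Set.inter_subset_left).symm.trans
    (hB.eq_of_subset (.inter hA.1 hB.1) hAB Set.inter_subset_right)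

lemma MinimalSet.of_rel_subset
    (hwlr : ∀ A C : Set V, G.memE A → G.memE C →
      ∀ α : List Λ, α ≠ [] → G.rel (A ∩ C) α = G.rel A α ∩ G.rel C α)
    {A D : Set V} {γ : List Λ} (hA : G.MinimalSet A) (hD : G.memE D) (hDne : D.Nonempty)
    (hγ : γ ≠ []) (hemit : ∀ d ∈ D, ∃ z, G.PathLabel d z γ) (hDA : G.rel D γ ⊆ A) :
    G.MinimalSet D := by
  refine ⟨hD, hDne, fun C hC => ?_⟩
  by_contra! hsplit
  have honto : ∀ B, G.memE B → B.Nonempty → B ⊆ D → G.rel B γ = A := by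
    intro B hB ⟨b, hb⟩ hBD
    obtain ⟨z, hz⟩ := hemit b (hBD hb)
    exact hA.eq_of_subset (.relRange γ hγ hB) ⟨z, b, hb, hz⟩ ((rel_mono hBD γ).trans hDA)
  have hin := honto (D ∩ C) (.inter hD hC) hsplit.2 Set.inter_subset_left
  have hout := honto (D \ C) (.diff hD hC)
    (Set.sdiff_nonempty.2 (mt Set.inter_eq_left.2 hsplit.1)) Set.sdiff_subset
  have hdisj : D ∩ C ∩ (D \ C) = ∅ :=
    (Set.disjoint_sdiff_right.mono_left Set.inter_subset_right).inter_eq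
  have hwlr' := hwlr _ _ (.inter hD hC) (.diff hD hC) γ hγ
  rw [hin, hout, Set.inter_self, hdisj, rel_empty] at hwlr'
  exact Set.not_nonempty_empty (hwlr' ▸ hA.2.1)

lemma lblFrom_subset_of_not_hasExit {A : Set V} {α : List Λ} (h : ¬ G.HasExit α A) :
    G.lblFrom A α.length ⊆ {α} := by
  rintro β ⟨hβ, u, hu, w, hp⟩
  by_contra hne
  exact h (.inl ⟨β, ⟨hβ, u, hu, w, hp⟩, hne, w, u, hu, hp⟩)

lemma rel_eq_of_not_hasExit {A : Set V} {α : List Λ} (hsub : A ⊆ G.rel A α)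
    (h : ¬ G.HasExit α A) : G.rel A α = A := by
  by_contra hne
  exact h (.inr (hsub.ssubset_of_ne (Ne.symm hne)))

section NoExit

variable {A : Set V} {α : List Λ}

lemma exists_append_eq_of_pathLabel (hsink : ∀ u : V, ∃ e : G.Edge, G.src e = u)
    (hlbl : G.lblFrom A α.length ⊆ {α}) {u d : V} {β : List Λ} (hu : u ∈ A)
    (hβ : G.PathLabel u d β) (hlt : β.length < α.length) :
    ∃ δ z, G.PathLabel d z δ ∧ β ++ δ = α := by
  obtain ⟨z, δ, hδ, hp⟩ := exists_pathLabel_length hsink d (m := α.length - β.length) (by omega)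
  exact ⟨δ, z, hp, hlbl ⟨by grind, u, hu, z, hβ.append hp⟩⟩

lemma isPrefix_of_pathLabel (hsink : ∀ u : V, ∃ e : G.Edge, G.src e = u)
    (hlbl : G.lblFrom A α.length ⊆ {α}) {u d : V} {β : List Λ} (hu : u ∈ A)
    (hβ : G.PathLabel u d β) (hle : β.length ≤ α.length) : β <+: α := by
  rcases hle.lt_or_eq with hlt | heq
  · obtain ⟨δ, -, -, h⟩ := exists_append_eq_of_pathLabel hsink hlbl hu hβ hlt
    exact ⟨δ, h⟩
  · rw [show β = α from hlbl ⟨heq, u, hu, d, hβ⟩]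

lemma exists_pathLabel_drop (hsink : ∀ u : V, ∃ e : G.Edge, G.src e = u)
    (hlbl : G.lblFrom A α.length ⊆ {α}) {u d : V} {i : ℕ} (hu : u ∈ A)
    (h : G.PathLabel u d (α.take i)) (hi : i < α.length) : ∃ z, G.PathLabel d z (α.drop i) := by
  obtain ⟨δ, z, hp, hδ⟩ := exists_append_eq_of_pathLabel hsink hlbl hu h (by grind)
  rw [List.append_cancel_left (hδ.trans (List.take_append_drop i α).symm)] at hp
  exact ⟨z, hp⟩

lemma exists_pathLabel_of_mem (hsink : ∀ u : V, ∃ e : G.Edge, G.src e = u)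
    (hlbl : G.lblFrom A α.length ⊆ {α}) (hα : α ≠ []) (hAα : G.rel A α ⊆ A) {u : V}
    (hu : u ∈ A) : ∃ v ∈ A, G.PathLabel u v α := by
  obtain ⟨v, δ, hδ, hp⟩ := exists_pathLabel_length hsink u (List.length_pos_iff.2 hα).ne'
  rw [show δ = α from hlbl ⟨hδ, u, hu, v, hp⟩] at hp
  exact ⟨v, hAα ⟨u, hu, hp⟩, hp⟩

lemma exists_pathLabel_wpow_succ (hsink : ∀ u : V, ∃ e : G.Edge, G.src e = u)
    (hlbl : G.lblFrom A α.length ⊆ {α}) (hα : α ≠ []) (hAα : G.rel A α ⊆ A) (k : ℕ) {u : V}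
    (hu : u ∈ A) : ∃ v ∈ A, G.PathLabel u v (wpow α (k + 1)) := by
  induction k generalizing u with
  | zero => simpa [wpow] using exists_pathLabel_of_mem hsink hlbl hα hAα hu
  | succ k ih =>
    obtain ⟨v, hv, hpv⟩ := ih hu
    obtain ⟨w, hw, hpw⟩ := exists_pathLabel_of_mem hsink hlbl hα hAα hv
    exact ⟨w, hw, wpow_succ' α (k + 1) ▸ hpv.append hpw⟩

lemma exists_wpow_append_of_pathLabel (hsink : ∀ u : V, ∃ e : G.Edge, G.src e = u)
    (hlbl : G.lblFrom A α.length ⊆ {α}) (hα : α ≠ []) (hAα : G.rel A α ⊆ A) {u z : V}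
    {w : List Λ} (hu : u ∈ A) (hw : G.PathLabel u z w) :
    ∃ (k : ℕ) (α' : List Λ), α' <+: α ∧ w = wpow α k ++ α' := by
  by_cases hle : w.length ≤ α.length
  · exact ⟨0, w, isPrefix_of_pathLabel hsink hlbl hu hw hle, by simp [wpow]⟩
  have hαpos := List.length_pos_iff.2 hα
  rw [← List.take_append_drop α.length w] at hw
  obtain ⟨v, hv, hrest⟩ := hw.split (List.ne_nil_of_length_pos (by grind))
    (List.ne_nil_of_length_pos (by grind))
  have hhead : w.take α.length = α :=
    (isPrefix_of_pathLabel hsink hlbl hu hv (by simp)).eq_of_length (by grind)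
  rw [hhead] at hv
  obtain ⟨k, α', hα', hk⟩ :=
    exists_wpow_append_of_pathLabel hsink hlbl hα hAα (hAα ⟨u, hu, hv⟩) hrest
  refine ⟨k + 1, α', hα', ?_⟩
  rw [← List.take_append_drop α.length w, hhead, hk]
  simp [wpow, List.replicate_succ]
termination_by w.length
decreasing_by grind

theorem lblFromGe_eq_of_not_hasExit (hsink : ∀ u : V, ∃ e : G.Edge, G.src e = u)
    (hlbl : G.lblFrom A α.length ⊆ {α}) (hα : α ≠ []) (hAα : G.rel A α ⊆ A)
    (hAne : A.Nonempty) :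
    G.lblFromGe A =
      {w : List Λ | w ≠ [] ∧ ∃ (k : ℕ) (α' : List Λ), α' <+: α ∧ w = wpow α k ++ α'} := by
  ext w
  constructor
  · rintro ⟨u, hu, z, hw⟩
    exact ⟨hw.ne_nil, exists_wpow_append_of_pathLabel hsink hlbl hα hAα hu hw⟩
  · rintro ⟨hne, k, α', hα', rfl⟩
    obtain ⟨u, hu⟩ := hAne
    obtain ⟨_, _, hp⟩ := exists_pathLabel_wpow_succ hsink hlbl hα hAα k hu
    exact ⟨u, hu, hp.exists_of_prefix
      (wpow_succ' α k ▸ (List.prefix_append_right_inj _).2 hα') hne⟩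

theorem minimalSet_rel_take (hS : G.Standing) (hA : G.MinimalSet A)
    (hlbl : G.lblFrom A α.length ⊆ {α}) (hAα : G.rel A α = A) {i : ℕ} (hi : 1 ≤ i)
    (hiα : i ≤ α.length) : G.MinimalSet (G.rel A (α.take i)) := by
  have hα : α ≠ [] := List.ne_nil_of_length_pos (by omega)
  rcases hiα.lt_or_eq with hlt | rfl
  · have htake : α.take i ≠ [] := List.ne_nil_of_length_pos (by grind)
    have hdrop : α.drop i ≠ [] := List.ne_nil_of_length_pos (by grind)
    obtain ⟨u, hu⟩ := hA.2.1
    obtain ⟨_, _, hp⟩ := exists_pathLabel_of_mem hS.no_sinks hlbl hα hAα.subset hu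
    obtain ⟨v, hv⟩ := hp.exists_of_prefix (List.take_prefix i α) htake
    refine hA.of_rel_subset hS.weakly_left_resolving (.relRange _ htake hA.1) ⟨v, u, hu, hv⟩
      hdrop ?_ ?_
    · rintro d ⟨u, hu, hd⟩
      exact exists_pathLabel_drop hS.no_sinks hlbl hu hd hlt
    · rw [rel_rel htake hdrop, List.take_append_drop, hAα]
  · rwa [List.take_length, hAα]

theorem rel_take_inter_rel_take_eq_empty (hloop : G.IsLoop α A) (hAα : G.rel A α = A)
    (hmin : ∀ i, 1 ≤ i → i ≤ α.length → G.MinimalSet (G.rel A (α.take i)))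
    (hshort : ∀ β : List Λ, G.IsLoop β A → α.length ≤ β.length) {i j : ℕ} (hi : 1 ≤ i)
    (hij : i < j) (hj : j ≤ α.length) : G.rel A (α.take i) ∩ G.rel A (α.take j) = ∅ := by
  by_contra hne
  have heq := (hmin i hi (by omega)).eq_of_inter_nonempty (hmin j (by omega) hj)
    (Set.nonempty_iff_ne_empty.2 hne)
  have htake : α.take i ≠ [] := List.ne_nil_of_length_pos (by grind)
  have hcut : G.rel A (α.take i ++ α.drop j) = A := by
    rcases hj.lt_or_eq with hlt | rfl
    · have hdrop : α.drop j ≠ [] := List.ne_nil_of_length_pos (by grind)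
      rw [← rel_rel htake hdrop, heq, rel_rel (List.ne_nil_of_length_pos (by grind)) hdrop,
        List.take_append_drop, hAα]
    · rw [List.drop_length, List.append_nil, heq, List.take_length, hAα]
  have hlen := hshort _ ⟨by simp [htake], hloop.2.1, hloop.2.2.1, hcut.symm.subset⟩
  simp only [List.length_append, List.length_take, List.length_drop] at hlen
  omega

end NoExit

end LabeledGraph

theorem stmt_10_general {V : Type*} {Λ : Type*}
    (G : LabeledGraph V Λ) (hS : G.Standing)
    (A : Set V) (hA : G.MinimalSet A) (α : List Λ)
    (hloop : G.IsLoop α A) (hnoexit : ¬ G.HasExit α A) :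
    (G.lblFromGe A =
      {w : List Λ | w ≠ [] ∧ ∃ (k : ℕ) (α' : List Λ), α' <+: α ∧ w = wpow α k ++ α'}) ∧
    (∀ i : ℕ, 1 ≤ i → i ≤ α.length → G.MinimalSet (G.rel A (α.take i))) ∧
    ((∀ β : List Λ, G.IsLoop β A → α.length ≤ β.length) →
      ∀ i j : ℕ, 1 ≤ i → i ≤ α.length → 1 ≤ j → j ≤ α.length → i ≠ j →
        G.rel A (α.take i) ∩ G.rel A (α.take j) = ∅) := by
  have hlbl := LabeledGraph.lblFrom_subset_of_not_hasExit hnoexit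
  have hAα := LabeledGraph.rel_eq_of_not_hasExit hloop.2.2.2 hnoexit
  have hmin (i : ℕ) (hi : 1 ≤ i) (hiα : i ≤ α.length) :=
    LabeledGraph.minimalSet_rel_take hS hA hlbl hAα hi hiα
  refine ⟨LabeledGraph.lblFromGe_eq_of_not_hasExit hS.no_sinks hlbl hloop.1 hAα.subset hA.2.1,
    hmin, ?_⟩
  intro hshort i j hi hiα hj hjα hij
  rcases hij.lt_or_gt with h | h
  · exact LabeledGraph.rel_take_inter_rel_take_eq_empty hloop hAα hmin hshort hi h hjα
  · rw [Set.inter_comm]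
    exact LabeledGraph.rel_take_inter_rel_take_eq_empty hloop hAα hmin hshort hj h hiα

/-- Lemma 4.3 (structure of a loop with no exit on a minimal set): if `A ∈ ℰ` is minimal
and `(α, A)` is a loop with no exit, then (1) `ℒ(AE^{≥1}) = {αᵏα' : k ≥ 0, α'` an
initial path of `α}`; (2) each relative range `r(A, α_{[1,i]})`, `1 ≤ i ≤ |α|`, is
minimal in `ℰ`; (3) if moreover `α` has the smallest length among all loops at `A`, these
relative ranges are pairwise disjoint. -/
theorem stmt_10 {V : Type*} {Λ : Type*} [Countable V] [Countable Λ]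
    (G : LabeledGraph V Λ) [Countable G.Edge] (hS : G.Standing)
    (A : Set V) (hA : G.MinimalSet A) (α : List Λ)
    (hloop : G.IsLoop α A) (hnoexit : ¬ G.HasExit α A) :
    (G.lblFromGe A =
      {w : List Λ | w ≠ [] ∧ ∃ (k : ℕ) (α' : List Λ), α' <+: α ∧ w = wpow α k ++ α'}) ∧
    (∀ i : ℕ, 1 ≤ i → i ≤ α.length → G.MinimalSet (G.rel A (α.take i))) ∧
    ((∀ β : List Λ, G.IsLoop β A → α.length ≤ β.length) →
      ∀ i j : ℕ, 1 ≤ i → i ≤ α.length → 1 ≤ j → j ≤ α.length → i ≠ j →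
        G.rel A (α.take i) ∩ G.rel A (α.take j) = ∅) :=
  stmt_10_general G hS A hA α hloop hnoexit
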